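/- arXiv:2010.00147 — 2 statements merged into one kernel-verified Lean document; each statement's English description precedes it below -/
import Mathlib

section
/- (k-deletion) Let (G,α) be a weighted graph containing a cycle C on k vertices, and let ε be a fixed edge of this cycle. Then Σ_{S ⊆ E(C)−ε} (−1)^{|S|} X_{(G−S,α)} = 0, where G−S is the graph obtained from G by deleting the edges of S. -/
open scoped BigOperators
open scoped Classical

namespace CSF

/-! ## Extended chromatic symmetric functions of multigraphs

A (multi)graph on a vertex type `V` is given by a multiset of edges `E : Multiset (Sym2 V)`
(loops and multiple edges allowed).  Colours are positive integers `ℕ+`, and the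
(extended) chromatic symmetric function lives in `MvPowerSeries ℕ+ ℚ`, the power series
in the commuting variables `x_j`, `j : ℕ+`. -/

/-- A proper colouring of the multigraph with edge multiset `E`. -/
def Proper {V C : Type*} (E : Multiset (Sym2 V)) (κ : V → C) : Prop :=
  ∀ u v : V, s(u, v) ∈ E → κ u ≠ κ v

/-- The monomial `∏_v x_{κ(v)}^{w(v)}`, recorded as its exponent vector. -/
noncomputable def mon {V : Type*} [Fintype V] (w : V → ℕ) (κ : V → ℕ+) : ℕ+ →₀ ℕ :=
  ∑ v, Finsupp.single (κ v) (w v)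

/-- The extended chromatic symmetric function `X_{(G,w)}` of the weighted graph with
edge multiset `E` and vertex weights `w`: the coefficient of a monomial `m` is the number
of proper colourings `κ` with `∏_v x_{κ(v)}^{w(v)} = x^m`. -/
noncomputable def X {V : Type*} [Fintype V] (E : Multiset (Sym2 V)) (w : V → ℕ) :
    MvPowerSeries ℕ+ ℚ :=
  fun m => (Nat.card {κ : V → ℕ+ // Proper E κ ∧ mon w κ = m} : ℚ)

/-- The chromatic polynomial `χ_G(k)`: the number of proper colourings with `k` colours. -/
noncomputable def chrom {V : Type*} [Fintype V] (E : Multiset (Sym2 V)) (k : ℕ) : ℕ :=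
  Nat.card {κ : V → Fin k // Proper E κ}

/-- Edge multiset of the labelled path `P_n` on `Fin n`: edges `v_i v_{i+1}`. -/
def pathE (n : ℕ) : Multiset (Sym2 (Fin n)) :=
  ((Finset.univ : Finset (Fin n × Fin n)).filter
    (fun p => (p.1 : ℕ) + 1 = (p.2 : ℕ))).val.map (fun p => s(p.1, p.2))

/-- Edge multiset of the labelled star `S_n` on `Fin n`: edges `v_i v_n`, `i ∈ [n-1]`. -/
def starE (n : ℕ) : Multiset (Sym2 (Fin n)) :=
  ((Finset.univ : Finset (Fin n × Fin n)).filter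
    (fun p => (p.1 : ℕ) + 1 < n ∧ (p.2 : ℕ) + 1 = n)).val.map (fun p => s(p.1, p.2))

/-- Edge multiset of a disjoint union of graphs on `Fin (m i)`, `i : Fin k`. -/
noncomputable def unionE {k : ℕ} {m : Fin k → ℕ}
    (Es : ∀ i, Multiset (Sym2 (Fin (m i)))) : Multiset (Sym2 (Σ i, Fin (m i))) :=
  ∑ i, (Es i).map (Sym2.map (fun v => ⟨i, v⟩))

/-- Extended chromatic symmetric function of a disjoint union of weighted graphs. -/
noncomputable def Xunion {k : ℕ} {m : Fin k → ℕ}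
    (Es : ∀ i, Multiset (Sym2 (Fin (m i)))) (ws : ∀ i, Fin (m i) → ℕ) :
    MvPowerSeries ℕ+ ℚ :=
  X (unionE Es) (fun v => ws v.1 v.2)

/-- `X_{P_l}`: chromatic symmetric function of the disjoint union of unweighted paths
`P_{l_1} ∪ ⋯ ∪ P_{l_k}`. -/
noncomputable def XPaths (l : List ℕ) : MvPowerSeries ℕ+ ℚ :=
  Xunion (m := fun i : Fin l.length => l.get i) (fun i => pathE (l.get i)) (fun _ _ => 1)

/-- `X_{S_l}`: chromatic symmetric function of a disjoint union of unweighted stars. -/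
noncomputable def XStars (l : List ℕ) : MvPowerSeries ℕ+ ℚ :=
  Xunion (m := fun i : Fin l.length => l.get i) (fun i => starE (l.get i)) (fun _ _ => 1)

/-- `X_{(P_{ℓ(α)}, α)}`: the extended chromatic symmetric function of the path on
`ℓ(α)` vertices whose `i`-th vertex has weight `α_i`. -/
noncomputable def Xwpath (α : List ℕ) : MvPowerSeries ℕ+ ℚ :=
  X (pathE α.length) (fun i => α.get i)

/-! ## Symmetric functions -/

/-- The power sum symmetric function `p_i = ∑_j x_j^i`. -/
noncomputable def pS (i : ℕ) : MvPowerSeries ℕ+ ℚ :=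
  fun m => if ∃ j : ℕ+, m = Finsupp.single j i then 1 else 0

/-- The complete homogeneous symmetric function `h_i`. -/
noncomputable def hS (i : ℕ) : MvPowerSeries ℕ+ ℚ :=
  fun m => if (m.sum fun _ k => k) = i then 1 else 0

/-- The elementary symmetric function `e_i`. -/
noncomputable def eS (i : ℕ) : MvPowerSeries ℕ+ ℚ :=
  fun m => if ((m.sum fun _ k => k) = i ∧ ∀ j, m j ≤ 1) then 1 else 0

/-- `p_λ = p_{λ_1} ⋯ p_{λ_k}`. -/
noncomputable def pProd (l : List ℕ) : MvPowerSeries ℕ+ ℚ := (l.map pS).prod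
/-- `h_λ = h_{λ_1} ⋯ h_{λ_k}`. -/
noncomputable def hProd (l : List ℕ) : MvPowerSeries ℕ+ ℚ := (l.map hS).prod
/-- `e_λ = e_{λ_1} ⋯ e_{λ_k}`. -/
noncomputable def eProd (l : List ℕ) : MvPowerSeries ℕ+ ℚ := (l.map eS).prod

/-- The algebra `Sym` of symmetric functions, realized as the subalgebra of
`MvPowerSeries ℕ+ ℚ` generated by the elementary symmetric functions. -/
noncomputable def SymAlg : Subalgebra ℚ (MvPowerSeries ℕ+ ℚ) :=
  Algebra.adjoin ℚ {f | ∃ i : ℕ, f = eS (i + 1)}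

/-- Sort a list into weakly decreasing order (the underlying partition `α̃`). -/
def sortDesc (l : List ℕ) : List ℕ := List.insertionSort (· ≥ ·) l

/-- Partitions: weakly decreasing lists of positive integers. -/
abbrev PartL : Type := {l : List ℕ // l.Pairwise (· ≥ ·) ∧ ∀ x ∈ l, 0 < x}

/-! ## Compositions -/

/-- All coarsenings of a composition: lists obtained by summing adjacent blocks. -/
def coarsenings : List ℕ → List (List ℕ)
  | [] => [[]]
  | a :: l =>
    (coarsenings l).map (fun β => a :: β) ++
      (coarsenings l).filterMap (fun β =>
        match β with
        | [] => none
        | b :: β' => some ((a + b) :: β'))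

/-- The ribbon Schur function `r_α = ∑_{β ≽ α} (-1)^{ℓ(α) - ℓ(β)} h_{β̃}`. -/
noncomputable def ribbon (α : List ℕ) : MvPowerSeries ℕ+ ℚ :=
  ((coarsenings α).map fun β =>
    ((-1 : ℚ) ^ (α.length - β.length)) • hProd (sortDesc β)).sum

lemma sum_take_get_le (α : List ℕ) (b : Fin α.length) :
    (α.take b).sum + α.get b ≤ α.sum := by
  have h1 : (α.take (b + 1)).sum = (α.take b).sum + α[b] := List.sum_take_succ α b b.isLt
  have h2 : (α.take (b + 1)).sum ≤ α.sum := by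
    conv_rhs => rw [← List.take_append_drop (b + 1) α]
    rw [List.sum_append]
    exact Nat.le_add_right _ _
  simpa [List.get_eq_getElem, ← h1] using h2

/-- Shift a graph on `Fin m` by an offset `o` inside `Fin n`. -/
def shiftE {m n : ℕ} (o : ℕ) (h : o + m ≤ n) (E : Multiset (Sym2 (Fin m))) :
    Multiset (Sym2 (Fin n)) :=
  E.map (Sym2.map (fun v : Fin m => (⟨o + (v : ℕ), by have := v.isLt; omega⟩ : Fin n)))

/-- The labelled graph `G_{α_1} | G_{α_2} | ⋯ | G_{α_k}` on `Fin (α₁ + ⋯ + α_k)`: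
consecutive blocks of vertices carry the graphs `Gr (α_i)`. -/
noncomputable def concatE (α : List ℕ) (Gr : (k : ℕ) → Multiset (Sym2 (Fin k))) :
    Multiset (Sym2 (Fin α.sum)) :=
  ∑ b : Fin α.length,
    shiftE ((α.take b).sum) (sum_take_get_le α b) (Gr (α.get b))

/-- `set(α) = {α_1, α_1+α_2, …, α_1+⋯+α_{ℓ(α)-1}} ⊆ [n-1]`. -/
def setC (α : List ℕ) : Finset ℕ :=
  ((List.range (α.length - 1)).map (fun j => (α.take (j + 1)).sum)).toFinset

/-- The labelled graph on `Fin n` whose edges are `v_i v_{i+1}` for `i ∈ S` (1-based). -/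
def edgesFromSet (n : ℕ) (S : Finset ℕ) : Multiset (Sym2 (Fin n)) :=
  ((Finset.univ : Finset (Fin n × Fin n)).filter
    (fun p => (p.1 : ℕ) + 1 = (p.2 : ℕ) ∧ (p.2 : ℕ) ∈ S)).val.map (fun p => s(p.1, p.2))

/-- `γ = α^c`, the complement composition: the composition of `|α|` with
`set(γ) = [n-1] − set(α)`. -/
def IsComplementOf (γ α : List ℕ) : Prop :=
  (∀ x ∈ γ, 0 < x) ∧ γ.sum = α.sum ∧ setC γ = Finset.Ioo 0 α.sum \ setC α

/-- Near concatenation `α ⊙ β` of compositions. -/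
def nconcat : List ℕ → List ℕ → List ℕ
  | [], β => β
  | [a], [] => [a]
  | [a], b :: β => (a + b) :: β
  | a :: l, β => a :: nconcat l β

/-- `β^{⊙ i}`, the `i`-fold near concatenation of `β` with itself. -/
def npowOdot (β : List ℕ) : ℕ → List ℕ
  | 0 => []
  | i + 1 => nconcat (npowOdot β i) β

/-- Composition of compositions: `α ∘ β = β^{⊙α_1} · ⋯ · β^{⊙α_{ℓ(α)}}`. -/
def compOp (α β : List ℕ) : List ℕ := (α.map (npowOdot β)).flatten

/-- The equivalence `α ∼ β`: `α` and `β` have `∘`-factorizations whose factors agree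
up to reversal.  (`[1]` is a two-sided identity for `∘`, so the empty fold is harmless.) -/
def simRel (α β : List ℕ) : Prop :=
  ∃ L M : List (List ℕ),
    List.Forall₂ (fun γ δ => (γ ≠ [] ∧ ∀ x ∈ γ, 0 < x) ∧ (δ = γ ∨ δ = γ.reverse)) L M ∧
    α = L.foldr compOp [1] ∧ β = M.foldr compOp [1]

/-- A trivial factorization `α = β ∘ γ`. -/
def TrivialFac (β γ : List ℕ) : Prop :=
  β = [1] ∨ γ = [1] ∨ (β.length = 1 ∧ γ.length = 1) ∨
    ((∀ x ∈ β, x = 1) ∧ ∀ x ∈ γ, x = 1)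

/-- `L` is an irreducible factorization of `α`. -/
def IsIrreducibleFac (α : List ℕ) (L : List (List ℕ)) : Prop :=
  (∀ γ ∈ L, γ ≠ [] ∧ ∀ x ∈ γ, 0 < x) ∧
  α = L.foldr compOp [1] ∧
  (∀ i : ℕ, ∀ h : i + 1 < L.length,
    ¬ TrivialFac (L.get ⟨i, by omega⟩) (L.get ⟨i + 1, h⟩)) ∧
  (∀ γ ∈ L, ∀ δ ε : List ℕ, δ ≠ [] → (∀ x ∈ δ, 0 < x) → ε ≠ [] → (∀ x ∈ ε, 0 < x) →
    γ = compOp δ ε → TrivialFac δ ε)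

/-- All compositions of `n` (lists of positive integers with sum `n`). -/
def comps : ℕ → List (List ℕ)
  | 0 => [[]]
  | n + 1 => (List.range (n + 1)).attach.flatMap fun j =>
      (comps j.1).map (fun c => (n + 1 - j.1) :: c)
  decreasing_by exact List.mem_range.mp j.2

/-- All refinements `α ≼ λ` of a composition `λ`. -/
def refinements : List ℕ → List (List ℕ)
  | [] => [[]]
  | a :: l => (comps a).flatMap fun c => (refinements l).map (fun r => c ++ r)

/-- All compositions `α ⊆ λ`: `ℓ(α) = ℓ(λ)` and `1 ≤ α_i ≤ λ_i`. -/
def boundedLists : List ℕ → List (List ℕ)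
  | [] => [[]]
  | a :: l => (List.range a).flatMap fun j => (boundedLists l).map (fun r => (j + 1) :: r)

/-! ## Expansions of weighted graphs -/

/-- Given a decomposition `L` of `β` witnessing `β ≼ α`, vertex `a` of `H` is in the block
`R(v_v)` (0-based `v`) when `a` lies among the consecutively labelled vertices of block `v`. -/
def inBlock (L : List (List ℕ)) (v a : ℕ) : Prop :=
  ((L.take v).map List.length).sum ≤ a ∧ a < ((L.take (v + 1)).map List.length).sum

/-- The relation `a R b`: `a` and `b` lie in a common block `R(v)`. -/
def Rrel (L : List (List ℕ)) (a b : ℕ) : Prop :=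
  ∃ v : ℕ, inBlock L v a ∧ inBlock L v b

/-! ## The lattice of contractions and its Möbius function -/

/-- The restriction of the graph `E` to `B` is connected. -/
def ConnOn {V : Type*} (E : Multiset (Sym2 V)) (B : Set V) : Prop :=
  ∀ a ∈ B, ∀ b ∈ B, Relation.ReflTransGen (fun x y => x ∈ B ∧ y ∈ B ∧ s(x, y) ∈ E) a b

/-- A connected set partition of the graph `E` (as a setoid on the vertices). -/
def ConnPart {V : Type*} (E : Multiset (Sym2 V)) (σ : Setoid V) : Prop :=
  ∀ v : V, ConnOn E {u | σ.r u v}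

/-- The lattice of contractions `L_G`: connected set partitions ordered by refinement. -/
def LContr {V : Type*} (E : Multiset (Sym2 V)) : Type _ := {σ : Setoid V // ConnPart E σ}

noncomputable instance setoidFintype {V : Type*} [Fintype V] : Fintype (Setoid V) :=
  Fintype.ofInjective (fun s : Setoid V => s.r)
    (fun s t h => by cases s; cases t; simp only at h; subst h; rfl)

noncomputable instance {V : Type*} [Fintype V] (E : Multiset (Sym2 V)) : Fintype (LContr E) :=
  letI := Classical.decPred (ConnPart E)
  Subtype.fintype _

instance {V : Type*} (E : Multiset (Sym2 V)) : PartialOrder (LContr E) :=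
  Subtype.partialOrder _

noncomputable instance {V : Type*} [Fintype V] (E : Multiset (Sym2 V)) :
    LocallyFiniteOrder (LContr E) :=
  letI := Classical.decRel (α := LContr E) (· < ·)
  letI := Classical.decRel (α := LContr E) (· ≤ ·)
  Fintype.toLocallyFiniteOrder

/-- The Möbius function of the lattice of contractions. -/
noncomputable def mobLC {V : Type*} [Fintype V] (E : Multiset (Sym2 V))
    (x y : LContr E) : ℚ :=
  letI := Classical.decEq (LContr E)
  IncidenceAlgebra.mu ℚ x y

/-- `p_{type(π,w)}`: the product over the blocks of `π` of `p_{(total weight of block)}`. -/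
noncomputable def ptype {V : Type*} [Fintype V] (σ : Setoid V) (w : V → ℕ) :
    MvPowerSeries ℕ+ ℚ :=
  letI := Classical.decEq (Quotient σ)
  letI := @Quotient.fintype V _ σ (Classical.decRel _)
  ∏ c : Quotient σ, pS (∑ v : V, if Quotient.mk σ v = c then w v else 0)

/-- `0̂`, the minimal element of the lattice of contractions: each vertex is its own block. -/
def botLC {V : Type*} (E : Multiset (Sym2 V)) : LContr E :=
  ⟨⊥, by
    intro v a ha b hb
    have ha' : a = v := ha
    have hb' : b = v := hb
    subst ha'; subst hb'; exact Relation.ReflTransGen.refl⟩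

/-! ## Composition of a composition with a weighted graph -/

section comp
variable {V : Type*} [Fintype V]

/-- The gluing relation: for `i ∈ S` (1-based), identify the vertex `z` of copy `i`
with the vertex `a` of copy `i + 1` (0-based copies `i - 1` and `i`). -/
def glueRel (a z : V) (n : ℕ) (S : Finset ℕ) : (Fin n × V) → (Fin n × V) → Prop :=
  fun x y => ∃ i ∈ S, ∃ (h1 : i - 1 < n) (h2 : i < n),
    x = (⟨i - 1, h1⟩, z) ∧ y = (⟨i, h2⟩, a)

def glueSetoid (a z : V) (n : ℕ) (S : Finset ℕ) : Setoid (Fin n × V) :=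
  Relation.EqvGen.setoid (glueRel a z n S)

/-- Vertices of the graph obtained from `n` copies of a graph on `V` by contracting the
connecting edges `z_i a_{i+1}`, `i ∈ S`. -/
def compV (a z : V) (n : ℕ) (S : Finset ℕ) : Type _ := Quotient (glueSetoid a z n S)

noncomputable instance (a z : V) (n : ℕ) (S : Finset ℕ) : Fintype (compV a z n S) :=
  @Quotient.fintype _ _ (glueSetoid a z n S) (Classical.decRel _)

/-- Edges: all edges of the `n` copies of `E`, together with the connecting edges
`z_i a_{i+1}` for `i ∈ [n-1] − S` (the ones not contracted). -/
noncomputable def compE (E : Multiset (Sym2 V)) (a z : V) (n : ℕ) (S : Finset ℕ) :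
    Multiset (Sym2 (compV a z n S)) :=
  (∑ i : Fin n, E.map (Sym2.map fun v =>
      (Quotient.mk (glueSetoid a z n S) (i, v) : compV a z n S)))
  + ((Finset.Ioo 0 n \ S).attach.val.map fun i =>
      s((Quotient.mk (glueSetoid a z n S)
          (⟨i.1 - 1, by
            have := i.2; simp only [Finset.mem_sdiff, Finset.mem_Ioo] at this; omega⟩, z) :
            compV a z n S),
        (Quotient.mk (glueSetoid a z n S)
          (⟨i.1, by
            have := i.2; simp only [Finset.mem_sdiff, Finset.mem_Ioo] at this; omega⟩, a) :
            compV a z n S)))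

/-- Weights: a contracted vertex receives the sum of the weights of its constituents. -/
noncomputable def compW (w : V → ℕ) (a z : V) (n : ℕ) (S : Finset ℕ) :
    compV a z n S → ℕ :=
  fun c => ∑ x : Fin n × V,
    if (Quotient.mk (glueSetoid a z n S) x : compV a z n S) = c then w x.2 else 0

/-- `X_{α ∘ (G,w)}`: take `|α|` copies of `(G,w)`, join successive copies by edges
`z_i a_{i+1}`, and contract exactly the connecting edges with `i ∈ set(α^c)`. -/
noncomputable def Xcomp (E : Multiset (Sym2 V)) (w : V → ℕ) (a z : V) (α : List ℕ) :
    MvPowerSeries ℕ+ ℚ :=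
  X (compE E a z α.sum (Finset.Ioo 0 α.sum \ setC α))
    (compW w a z α.sum (Finset.Ioo 0 α.sum \ setC α))

end comp

/-! Fix a monomial and a colouring `κ`, and pair the subsets `S ⊆ E(C) − ε` off.  If some edge
`e` of `C − ε` joins two vertices of different colours, deleting `e` does not affect whether `κ`
is proper, so `S` and `S + e` contribute with opposite signs.  Otherwise every edge of `C`
other than `ε` is monochromatic, hence so is `ε` (go around the cycle); as `ε` is never
deleted, `κ` is then proper for no `G − S`. -/

theorem sum_powerset_neg_one_pow_mul_eq_zero {R β : Type*} [CommRing R] {T : Multiset β}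
    {e : β} (he : e ∈ T) (f : Multiset β → R) (hf : ∀ S, f (e ::ₘ S) = f S) :
    (T.powerset.map fun S => (-1) ^ Multiset.card S * f S).sum = 0 := by
  obtain ⟨T, rfl⟩ := Multiset.exists_cons_of_mem he
  simp [Multiset.powerset_cons, Multiset.map_map, hf, pow_succ]

theorem eq_of_forall_lt_eq_succ {C : Type*} (h : ℕ → C) {n : ℕ}
    (H : ∀ j < n, h j = h (j + 1)) : h 0 = h n := by
  induction n with
  | zero => rfl
  | succ n ih => exact (ih fun j hj => H j (by omega)).trans (H n n.lt_succ_self)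

theorem apply_eq_apply_succ_of_forall_ne {C : Type*} {k : ℕ} (hk : 0 < k) (g : Fin k → C)
    (i₀ : Fin k) (H : ∀ i ≠ i₀, g i = g ⟨(i + 1) % k, Nat.mod_lt _ hk⟩) :
    g i₀ = g ⟨(i₀ + 1) % k, Nat.mod_lt _ hk⟩ := by
  let h : ℕ → C := fun j => g ⟨(i₀ + 1 + j) % k, Nat.mod_lt _ hk⟩
  have hstep : ∀ j < k - 1, h j = h (j + 1) := by
    intro j hj
    have hne : (⟨(i₀ + 1 + j) % k, Nat.mod_lt _ hk⟩ : Fin k) ≠ i₀ := by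
      intro heq
      have hval := congrArg Fin.val heq
      by_cases hlt : i₀ + 1 + j < k
      · rw [Fin.val_mk, Nat.mod_eq_of_lt hlt] at hval; omega
      · rw [Fin.val_mk, Nat.mod_eq_sub_mod (by omega), Nat.mod_eq_of_lt (by omega)] at hval
        omega
    change g _ = g _
    rw [H _ hne]
    exact congrArg g (Fin.ext (by simp only [Nat.mod_add_mod, Nat.add_assoc]))
  have hlast : h (k - 1) = g i₀ := by
    simp only [h, show (i₀ : ℕ) + 1 + (k - 1) = i₀ + k by omega, Nat.add_mod_right,
      Nat.mod_eq_of_lt i₀.isLt]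
  simpa [h, hlast] using (eq_of_forall_lt_eq_succ h hstep).symm

section cycle

variable {V : Type*}

theorem proper_iff_forall_not_isDiag {C : Type*} {E : Multiset (Sym2 V)} {κ : V → C} :
    Proper E κ ↔ ∀ e ∈ E, ¬ (e.map κ).IsDiag := by
  refine ⟨fun h e he => ?_, fun h u v huv => by simpa using h _ huv⟩
  induction e using Sym2.ind with
  | _ u v => simpa using h u v he

theorem proper_erase_iff [DecidableEq V] {C : Type*} {E : Multiset (Sym2 V)} {κ : V → C}
    {e : Sym2 V} (he : ¬ (e.map κ).IsDiag) : Proper (E.erase e) κ ↔ Proper E κ := by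
  simp only [proper_iff_forall_not_isDiag]
  refine ⟨fun h e' he' => ?_, fun h e' he' => h e' (Multiset.mem_of_mem_erase he')⟩
  by_cases hee : e' = e
  · exact hee ▸ he
  · exact h e' ((Multiset.mem_erase_of_ne hee).2 he')

variable {k : ℕ} (hk : 0 < k) (c : Fin k → V)

def cycleEdge (i : Fin k) : Sym2 V := s(c i, c ⟨(i + 1) % k, Nat.mod_lt _ hk⟩)

def cycleEdges : Multiset (Sym2 V) := (Finset.univ : Finset (Fin k)).val.map (cycleEdge hk c)

theorem cycleEdges_erase [DecidableEq V] (i₀ : Fin k) :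
    (cycleEdges hk c).erase (cycleEdge hk c i₀) =
      (Finset.univ.erase i₀).val.map (cycleEdge hk c) := by
  rw [cycleEdges, ← Multiset.cons_erase (Finset.mem_univ_val i₀), Multiset.map_cons,
    Multiset.erase_cons_head, Finset.erase_val]

theorem isDiag_map_of_forall_mem_cycleEdges_erase [DecidableEq V] {C : Type*} {κ : V → C}
    {ε : Sym2 V} (hε : ε ∈ cycleEdges hk c)
    (hmono : ∀ e ∈ (cycleEdges hk c).erase ε, (e.map κ).IsDiag) :
    (ε.map κ).IsDiag := by
  obtain ⟨i₀, -, rfl⟩ := Multiset.mem_map.1 hε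
  rw [cycleEdges_erase] at hmono
  simp only [cycleEdge, Sym2.map_mk, Sym2.mk_isDiag_iff]
  refine apply_eq_apply_succ_of_forall_ne hk (κ ∘ c) i₀ fun i hi => ?_
  simpa [cycleEdge] using
    hmono _ (Multiset.mem_map_of_mem _ (Finset.mem_erase.2 ⟨hi, Finset.mem_univ i⟩))

theorem sum_powerset_cycleEdges_erase_proper_eq_zero [DecidableEq V] {R C : Type*} [CommRing R]
    (κ : V → C) {E : Multiset (Sym2 V)} (hsub : cycleEdges hk c ≤ E) {ε : Sym2 V}
    (hε : ε ∈ cycleEdges hk c) :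
    (((cycleEdges hk c).erase ε).powerset.map fun S =>
      (-1 : R) ^ Multiset.card S * if Proper (E - S) κ then 1 else 0).sum = 0 := by
  by_cases hbi : ∃ e ∈ (cycleEdges hk c).erase ε, ¬ (e.map κ).IsDiag
  · obtain ⟨e, he, hbi⟩ := hbi
    refine sum_powerset_neg_one_pow_mul_eq_zero he _ fun S => ?_
    rw [← Multiset.singleton_add, tsub_add_eq_tsub_tsub_swap, Multiset.sub_singleton,
      if_congr (proper_erase_iff hbi) rfl rfl]
  · push Not at hbi
    have hεmono := isDiag_map_of_forall_mem_cycleEdges_erase hk c hε hbi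
    refine Multiset.sum_eq_zero fun x hx => ?_
    obtain ⟨S, hS, rfl⟩ := Multiset.mem_map.1 hx
    have hεS : ε ∈ E - S := Multiset.singleton_le.1 <| le_tsub_of_add_le_right <|
      (Multiset.cons_erase hε ▸ Multiset.cons_le_cons ε (Multiset.mem_powerset.1 hS)).trans hsub
    rw [if_neg fun hp => proper_iff_forall_not_isDiag.1 hp ε hεS hεmono, mul_zero]

end cycle

section coeff

variable {V : Type*} [Fintype V]

theorem mem_support_mon {w : V → ℕ} (κ : V → ℕ+) {v : V} (hv : 0 < w v) :
    κ v ∈ (mon w κ).support := by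
  rw [Finsupp.mem_support_iff, mon, Finsupp.finsetSum_apply]
  refine (lt_of_lt_of_le ?_ (Finset.single_le_sum (fun u _ => Nat.zero_le _)
    (Finset.mem_univ v))).ne'
  simpa using hv

noncomputable def monFiber (w : V → ℕ) (m : ℕ+ →₀ ℕ) : Finset (V → ℕ+) :=
  (Fintype.piFinset fun _ => m.support).filter (mon w · = m)

theorem mem_monFiber {w : V → ℕ} (hw : ∀ v, 0 < w v) {m : ℕ+ →₀ ℕ} {κ : V → ℕ+} :
    κ ∈ monFiber w m ↔ mon w κ = m := by
  refine ⟨fun h => (Finset.mem_filter.1 h).2, fun h => Finset.mem_filter.2 ⟨?_, h⟩⟩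
  exact Fintype.mem_piFinset.2 fun v => h ▸ mem_support_mon κ (hw v)

theorem X_apply {w : V → ℕ} (hw : ∀ v, 0 < w v) (E : Multiset (Sym2 V)) (m : ℕ+ →₀ ℕ) :
    X E w m = ∑ κ ∈ monFiber w m, if Proper E κ then 1 else 0 := by
  rw [Finset.sum_boole, X, ← Nat.card_eq_finsetCard]
  congr 1
  refine Nat.card_congr (Equiv.subtypeEquivRight fun κ => ?_)
  rw [Finset.mem_filter, mem_monFiber hw, and_comm]

end coeff

theorem k_deletion_general
    (α : List ℕ) (hαpos : ∀ x ∈ α, 0 < x)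
    (EG : Multiset (Sym2 (Fin α.length)))
    (k : ℕ) (hk : 0 < k) (c : Fin k → Fin α.length)
    (EC : Multiset (Sym2 (Fin α.length)))
    (hEC : EC = (Finset.univ : Finset (Fin k)).val.map
      (fun i => s(c i, c ⟨((i : ℕ) + 1) % k, Nat.mod_lt _ hk⟩)))
    (hsub : EC ≤ EG)
    (ε : Sym2 (Fin α.length)) (hε : ε ∈ EC) :
    ((EC.erase ε).powerset.map fun S =>
      ((-1 : ℚ) ^ Multiset.card S) • X (EG - S) (fun i => α.get i)).sum = 0 := by
  have hw : ∀ v, 0 < α.get v := fun v => hαpos _ (α.get_mem v)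
  change EC = cycleEdges hk c at hEC
  subst hEC
  refine MvPowerSeries.ext fun m => ?_
  rw [map_multiset_sum, map_zero, Multiset.map_map]
  simp only [Function.comp_def, MvPowerSeries.coeff_smul]
  simp only [MvPowerSeries.coeff_apply, X_apply hw, Finset.mul_sum]
  simp only [Finset.sum_eq_multiset_sum]
  rw [Multiset.sum_map_sum_map]
  exact Multiset.sum_eq_zero fun x hx => by
    obtain ⟨κ, -, rfl⟩ := Multiset.mem_map.1 hx
    exact sum_powerset_cycleEdges_erase_proper_eq_zero hk c κ hsub hε

/-- **Theorem (k-deletion).**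
Let `(G,α)` be a weighted graph containing a cycle `C` on `k` vertices
(`c : Fin k → V` injective, with edge multiset `EC ≤ E(G)`), and let `ε` be a fixed edge
of this cycle.  Then `∑_{S ⊆ E(C) − ε} (-1)^{|S|} X_{(G−S,α)} = 0`. -/
theorem k_deletion
    (α : List ℕ) (hαpos : ∀ x ∈ α, 0 < x)
    (EG : Multiset (Sym2 (Fin α.length)))
    (k : ℕ) (hk : 0 < k) (c : Fin k → Fin α.length) (hc : Function.Injective c)
    (EC : Multiset (Sym2 (Fin α.length)))
    (hEC : EC = (Finset.univ : Finset (Fin k)).val.map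
      (fun i => s(c i, c ⟨((i : ℕ) + 1) % k, Nat.mod_lt _ hk⟩)))
    (hsub : EC ≤ EG)
    (ε : Sym2 (Fin α.length)) (hε : ε ∈ EC) :
    ((EC.erase ε).powerset.map fun S =>
      ((-1 : ℚ) ^ Multiset.card S) • X (EG - S) (fun i => α.get i)).sum = 0 :=
  k_deletion_general α hαpos EG k hk c EC hEC hsub ε hε

end CSF
end

section
/- Let U: Sym → Sym be the unique linear map with U(e_λ) = X_{P_λ} for every partition λ (U is a well-defined graded algebra automorphism since both {e_λ} and {X_{P_λ}} are multiplicative bases of Sym). Then U(r_α) = X_{(P_{ℓ(α)},α)} for every nonempty composition α. -/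
/-!
Deletion–contraction at the first edge of a weighted path gives the Whitney-type expansion
`X_{(P, α)} = ∑_{β ≽ α} (-1)^(ℓ(α) - ℓ(β)) p_β`, which is the defining expansion of `r_α` with
`h` replaced by `p`. So it suffices to show `U(h_λ) = p_λ`.

For `α = 1ⁿ` the expansion reads `X_{P_n} = ∑_{γ ⊨ n} (-1)^(n - ℓ(γ)) p_γ`. The transform
`b ↦ (n ↦ ∑_{γ ⊨ n} (-1)^(n - ℓ(γ)) b_γ)` is an involution on sequences with `b₀ = 1`, because
`a` is the transform of `b` iff `a₀ = 1` and `∑_{i+j=n} (-1)^i b_i a_j = 0` for all `n ≥ 1`, a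
relation that is symmetric in `a` and `b` up to the sign `(-1)^n`. Hence `p_n = ∑_γ (-1)^(n - ℓ(γ)) X_{P_γ}`, while
`∑_{i+j=n} (-1)^i e_i h_j = 0` gives `h_n = ∑_γ (-1)^(n - ℓ(γ)) e_γ`. Multiplying these expansions
out, `U(h_λ) = p_λ` follows from the linearity of `U` and `U(e_γ) = X_{P_γ}`.
-/

open scoped BigOperators
open scoped Classical

namespace CSF

/-! ### Counting series -/

noncomputable def countingSeries {α : Type*} (F : α → ℕ+ →₀ ℕ) : MvPowerSeries ℕ+ ℚ :=
  fun m => Nat.card {a // F a = m}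

section countingSeries

variable {α β : Type*}

lemma countingSeries_congr (e : α ≃ β) {F : α → ℕ+ →₀ ℕ} {G : β → ℕ+ →₀ ℕ}
    (h : ∀ a, F a = G (e a)) : countingSeries F = countingSeries G :=
  MvPowerSeries.ext fun _ => congrArg (Nat.cast : ℕ → ℚ)
    (Nat.card_congr (e.subtypeEquiv fun a => by rw [h]))

lemma countingSeries_eq_add_compl (F : α → ℕ+ →₀ ℕ) (hF : ∀ m, Finite {a // F a = m})
    (p : α → Prop) :
    countingSeries F =
      countingSeries (fun a : {a // p a} => F a) + countingSeries (fun a : {a // ¬p a} => F a) := by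
  ext m
  have swap (q : α → Prop) : {a : {a // q a} // F a = m} ≃ {a : {a // F a = m} // q a} :=
    (Equiv.subtypeSubtypeEquivSubtypeInter q (F · = m)).trans <|
      (Equiv.subtypeEquivRight fun _ => and_comm).trans
        (Equiv.subtypeSubtypeEquivSubtypeInter (F · = m) q).symm
  change (Nat.card _ : ℚ) = Nat.card _ + Nat.card _
  rw [Nat.card_congr (swap p), Nat.card_congr (swap (¬p ·)), ← Nat.cast_add, ← Nat.card_sum,
    Nat.card_congr (Equiv.sumCompl fun a : {a // F a = m} => p a)]

lemma countingSeries_mul (F : α → ℕ+ →₀ ℕ) (G : β → ℕ+ →₀ ℕ)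
    (hF : ∀ m, Finite {a // F a = m}) (hG : ∀ m, Finite {b // G b = m}) :
    countingSeries F * countingSeries G = countingSeries fun x : α × β => F x.1 + G x.2 := by
  ext m
  rw [MvPowerSeries.coeff_mul]
  have e : (Σ pq : Finset.HasAntidiagonal.antidiagonal m,
      {a // F a = pq.1.1} × {b // G b = pq.1.2}) ≃ {x : α × β // F x.1 + G x.2 = m} :=
    { toFun := fun y => ⟨(y.2.1, y.2.2), by
        rw [y.2.1.2, y.2.2.2]; exact Finset.HasAntidiagonal.mem_antidiagonal.1 y.1.2⟩
      invFun := fun x => ⟨⟨(F x.1.1, G x.1.2), Finset.HasAntidiagonal.mem_antidiagonal.2 x.2⟩,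
        ⟨x.1.1, rfl⟩, ⟨x.1.2, rfl⟩⟩
      left_inv := by
        rintro ⟨⟨⟨p, q⟩, h⟩, ⟨a, ha⟩, ⟨b, hb⟩⟩
        dsimp only at ha hb
        subst ha hb
        rfl
      right_inv := fun x => rfl }
  change _ = (Nat.card _ : ℚ)
  rw [← Nat.card_congr e, Nat.card_sigma, ← Finset.sum_coe_sort]
  push_cast
  simp only [Nat.card_prod, Nat.cast_mul]
  rfl

end countingSeries

lemma finite_fiber_of_injective {α β : Type*} {F : α → ℕ+ →₀ ℕ} {G : β → ℕ+ →₀ ℕ}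
    (hG : ∀ m, Finite {b // G b = m}) (f : α → β) (hf : Function.Injective f)
    (h : ∀ a, F a = G (f a)) (m : ℕ+ →₀ ℕ) : Finite {a // F a = m} :=
  Finite.of_injective (fun a => (⟨f a, (h a).symm.trans a.2⟩ : {b // G b = m}))
    fun _ _ hab => Subtype.ext (hf (congrArg Subtype.val hab))

lemma pS_eq_countingSeries {a : ℕ} (ha : 0 < a) :
    pS a = countingSeries fun j : ℕ+ => Finsupp.single j a := by
  ext m
  change (if _ then _ else _) = (Nat.card _ : ℚ)
  split_ifs with h
  · obtain ⟨j, rfl⟩ := h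
    have : Unique {j' : ℕ+ // Finsupp.single j' a = Finsupp.single j a} :=
      ⟨⟨⟨j, rfl⟩⟩, fun j' => Subtype.ext (Finsupp.single_left_injective ha.ne' j'.2)⟩
    simp
  · have : IsEmpty {j : ℕ+ // Finsupp.single j a = m} := ⟨fun j => h ⟨j, j.2.symm⟩⟩
    simp

lemma finite_fiber_single {a : ℕ} (ha : 0 < a) (m : ℕ+ →₀ ℕ) :
    Finite {j : ℕ+ // Finsupp.single j a = m} :=
  Finite.of_injective (fun _ => (() : Unit)) fun j j' _ =>
    Subtype.ext (Finsupp.single_left_injective ha.ne' (j.2.trans j'.2.symm))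

lemma proper_map {V W C : Type*} (f : V → W) (E : Multiset (Sym2 V)) (κ : W → C) :
    Proper (E.map (Sym2.map f)) κ ↔ Proper E (κ ∘ f) := by
  refine ⟨fun h u v huv => h (f u) (f v) (Multiset.mem_map.2 ⟨s(u, v), huv, rfl⟩), ?_⟩
  intro h u v huv
  obtain ⟨e, he, hmap⟩ := Multiset.mem_map.1 huv
  induction e using Sym2.ind with
  | _ x y =>
    rcases Sym2.eq_iff.1 hmap with ⟨rfl, rfl⟩ | ⟨rfl, rfl⟩
    exacts [h x y he, (h x y he).symm]

lemma proper_add {V C : Type*} (E₁ E₂ : Multiset (Sym2 V)) (κ : V → C) :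
    Proper (E₁ + E₂) κ ↔ Proper E₁ κ ∧ Proper E₂ κ := by
  simp only [Proper, Multiset.mem_add, or_imp, forall_and]

section X

variable {V W : Type*} [Fintype V] [Fintype W]

lemma X_eq_countingSeries (E : Multiset (Sym2 V)) (w : V → ℕ) :
    X E w = countingSeries fun κ : {κ : V → ℕ+ // Proper E κ} => mon w κ :=
  MvPowerSeries.ext fun m => congrArg (Nat.cast : ℕ → ℚ) (Nat.card_congr
    (Equiv.subtypeSubtypeEquivSubtypeInter (Proper E) (mon w · = m)).symm)

lemma le_mon_apply (w : V → ℕ) (κ : V → ℕ+) (v : V) : w v ≤ mon w κ (κ v) := by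
  rw [mon, Finsupp.finsetSum_apply]
  exact le_of_eq_of_le (by simp) (Finset.single_le_sum (fun _ _ => Nat.zero_le _)
    (Finset.mem_univ v))

lemma finite_fiber_mon {w : V → ℕ} (hw : ∀ v, 0 < w v) (m : ℕ+ →₀ ℕ) :
    Finite {κ : V → ℕ+ // mon w κ = m} := by
  have hmem (κ : {κ : V → ℕ+ // mon w κ = m}) (v : V) : κ.1 v ∈ m.support :=
    Finsupp.mem_support_iff.2 (κ.2 ▸ (hw v).trans_le (le_mon_apply w κ.1 v)).ne'
  exact Finite.of_injective (fun κ v => (⟨κ.1 v, hmem κ v⟩ : m.support))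
    fun κ κ' h => Subtype.ext (funext fun v => congrArg Subtype.val (congrFun h v))

lemma finite_fiber_mon_proper (E : Multiset (Sym2 V)) {w : V → ℕ} (hw : ∀ v, 0 < w v)
    (m : ℕ+ →₀ ℕ) : Finite {κ : {κ : V → ℕ+ // Proper E κ} // mon w κ = m} :=
  finite_fiber_of_injective (finite_fiber_mon hw) _ Subtype.val_injective (fun _ => rfl) m

lemma X_map_equiv (e : V ≃ W) (E : Multiset (Sym2 V)) (w : V → ℕ) :
    X (E.map (Sym2.map e)) (w ∘ e.symm) = X E w := by
  rw [X_eq_countingSeries, X_eq_countingSeries]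
  refine countingSeries_congr
    ((e.arrowCongr (Equiv.refl ℕ+)).symm.subtypeEquiv fun κ => ?_) fun κ => ?_
  · simp [proper_map, Equiv.arrowCongr, Function.comp_def]
  · exact Fintype.sum_equiv e.symm _ _ fun x => by simp [Equiv.arrowCongr]

lemma X_of_isEmpty [IsEmpty V] (E : Multiset (Sym2 V)) (w : V → ℕ) : X E w = 1 := by
  ext m
  have hmon (κ : V → ℕ+) : mon w κ = 0 := by simp [mon]
  have : Unique {κ : V → ℕ+ // Proper E κ ∧ mon w κ = 0} :=
    ⟨⟨⟨isEmptyElim, fun u => isEmptyElim u, hmon _⟩⟩,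
      fun κ => Subtype.ext (funext isEmptyElim)⟩
  change (Nat.card _ : ℚ) = MvPowerSeries.coeff m 1
  rw [MvPowerSeries.coeff_one]
  split_ifs with h
  · subst h; simp
  · have : IsEmpty {κ : V → ℕ+ // Proper E κ ∧ mon w κ = m} :=
      ⟨fun κ => h (κ.2.2.symm.trans (hmon κ))⟩
    simp

lemma X_add_map_inl_inr (E₁ : Multiset (Sym2 V)) (E₂ : Multiset (Sym2 W)) {w₁ : V → ℕ}
    {w₂ : W → ℕ} (h₁ : ∀ v, 0 < w₁ v) (h₂ : ∀ v, 0 < w₂ v) :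
    X (E₁.map (Sym2.map Sum.inl) + E₂.map (Sym2.map Sum.inr)) (Sum.elim w₁ w₂) =
      X E₁ w₁ * X E₂ w₂ := by
  rw [X_eq_countingSeries, X_eq_countingSeries, X_eq_countingSeries,
    countingSeries_mul _ _ (finite_fiber_mon_proper E₁ h₁) (finite_fiber_mon_proper E₂ h₂)]
  refine countingSeries_congr
    (((Equiv.sumArrowEquivProdArrow V W ℕ+).subtypeEquiv fun κ => ?_).trans
      Equiv.subtypeProdEquivProd) fun κ => ?_
  · rw [proper_add, proper_map, proper_map]
    rfl
  · exact Fintype.sum_sum_type _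

end X

/-! ### Weighted paths -/

lemma mem_pathE_succ {n : ℕ} {e : Sym2 (Fin (n + 1))} :
    e ∈ pathE (n + 1) ↔ ∃ i : Fin n, e = s(i.castSucc, i.succ) := by
  simp only [pathE, Multiset.mem_map, Finset.mem_val, Finset.mem_filter, Finset.mem_univ,
    true_and, Prod.exists]
  constructor
  · rintro ⟨a, b, hab, rfl⟩
    exact ⟨⟨a, by omega⟩, by congr; ext; simp [hab]⟩
  · rintro ⟨i, rfl⟩
    exact ⟨_, _, by simp, rfl⟩

lemma proper_pathE_succ_iff {n : ℕ} {C : Type*} (κ : Fin (n + 1) → C) :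
    Proper (pathE (n + 1)) κ ↔ ∀ i : Fin n, κ i.castSucc ≠ κ i.succ := by
  refine ⟨fun h i => h _ _ (mem_pathE_succ.2 ⟨i, rfl⟩), fun h u v huv => ?_⟩
  obtain ⟨i, hi⟩ := mem_pathE_succ.1 huv
  rcases Sym2.eq_iff.1 hi with ⟨rfl, rfl⟩ | ⟨rfl, rfl⟩
  exacts [h i, (h i).symm]

lemma proper_pathE_succ_succ_iff {n : ℕ} {C : Type*} (κ : Fin (n + 2) → C) :
    Proper (pathE (n + 2)) κ ↔ κ 0 ≠ κ 1 ∧ Proper (pathE (n + 1)) (Fin.tail κ) := by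
  rw [proper_pathE_succ_iff, proper_pathE_succ_iff, Fin.forall_fin_succ]
  simp only [Fin.castSucc_zero, Fin.succ_zero_eq_one, Fin.tail, ← Fin.succ_castSucc]

lemma X_pathE_one {w : Fin 1 → ℕ} (hw : 0 < w 0) : X (pathE 1) w = pS (w 0) := by
  rw [X_eq_countingSeries, pS_eq_countingSeries hw]
  refine countingSeries_congr ((Equiv.subtypeUnivEquiv fun κ =>
    (proper_pathE_succ_iff κ).2 finZeroElim).trans (Equiv.funUnique (Fin 1) ℕ+)) fun κ => ?_
  simp [mon]

section deletionContraction

variable {n : ℕ}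

lemma mon_cons (w : Fin (n + 1) → ℕ) (j : ℕ+) (κ : Fin n → ℕ+) :
    mon w (Fin.cons j κ) = Finsupp.single j (w 0) + mon (Fin.tail w) κ := by
  simp [mon, Fin.sum_univ_succ, Fin.tail]

lemma mon_cons_add (w : Fin (n + 2) → ℕ) (κ : Fin (n + 1) → ℕ+) :
    mon (Fin.cons (w 0 + w 1) (Fin.tail (Fin.tail w))) κ =
      Finsupp.single (κ 0) (w 0) + mon (Fin.tail w) κ := by
  simp [mon, Fin.sum_univ_succ, Fin.tail, Finsupp.single_add, add_assoc]

/-- Deletion–contraction at the edge `v₁v₂`: a colour `j` of `v₁` together with a proper colouring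
`κ` of `v₂ ⋯ v_{n+2}` is a proper colouring of the whole path if `j ≠ κ v₂`, and a proper colouring
of the path with `v₁` and `v₂` merged if `j = κ v₂`. -/
lemma pS_mul_X_pathE {w : Fin (n + 2) → ℕ} (hw : ∀ i, 0 < w i) :
    pS (w 0) * X (pathE (n + 1)) (Fin.tail w) =
      X (pathE (n + 2)) w + X (pathE (n + 1)) (Fin.cons (w 0 + w 1) (Fin.tail (Fin.tail w))) := by
  have hfin := finite_fiber_of_injective (finite_fiber_mon hw)
    (fun x : ℕ+ × {κ // Proper (pathE (n + 1)) κ} => Fin.cons x.1 x.2.1)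
    (fun x y h => by
      obtain ⟨h1, h2⟩ := Fin.cons_injective2 h
      exact Prod.ext h1 (Subtype.ext h2))
    (fun x => (mon_cons w x.1 x.2.1).symm)
  rw [pS_eq_countingSeries (hw 0), X_eq_countingSeries,
    countingSeries_mul _ _ (finite_fiber_single (hw 0))
      (finite_fiber_mon_proper (w := Fin.tail w) _ fun i => hw _),
    countingSeries_eq_add_compl _ hfin (fun x => x.1 = x.2.1 0), add_comm,
    X_eq_countingSeries, X_eq_countingSeries]
  congr 1
  · let e : {x : ℕ+ × {κ // Proper (pathE (n + 1)) κ} // ¬x.1 = x.2.1 0} ≃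
        {κ : Fin (n + 2) → ℕ+ // Proper (pathE (n + 2)) κ} :=
      { toFun := fun x => ⟨Fin.cons x.1.1 x.1.2.1,
          (proper_pathE_succ_succ_iff _).2 ⟨by simpa using x.2, by simpa using x.1.2.2⟩⟩
        invFun := fun κ => ⟨(κ.1 0, ⟨Fin.tail κ.1, ((proper_pathE_succ_succ_iff _).1 κ.2).2⟩),
          ((proper_pathE_succ_succ_iff _).1 κ.2).1⟩
        left_inv := fun x => by simp
        right_inv := fun κ => by simp }
    exact countingSeries_congr e fun x => (mon_cons w x.1.1 x.1.2.1).symm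
  · let e : {x : ℕ+ × {κ // Proper (pathE (n + 1)) κ} // x.1 = x.2.1 0} ≃
        {κ // Proper (pathE (n + 1)) κ} :=
      { toFun := fun x => x.1.2
        invFun := fun κ => ⟨(κ.1 0, κ), rfl⟩
        left_inv := by rintro ⟨⟨j, κ⟩, rfl : j = κ.1 0⟩; rfl
        right_inv := fun _ => rfl }
    refine countingSeries_congr e fun x => ?_
    simp only [e, mon_cons_add, Equiv.coe_fn_mk, x.2]

end deletionContraction

section coarsenings

lemma coarsenings_cons_cons (a b : ℕ) (l : List ℕ) :
    coarsenings (a :: b :: l) =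
      (coarsenings (b :: l)).map (a :: ·) ++ coarsenings ((a + b) :: l) := by
  simp only [coarsenings, List.filterMap_append, List.filterMap_map, List.map_append]
  congr 1
  rw [List.filterMap_filterMap]
  congr 1
  · exact congrFun List.filterMap_eq_map _
  · refine List.filterMap_congr fun β _ => ?_
    cases β <;> simp [add_assoc]

lemma mem_coarsenings_cons {a : ℕ} {l β : List ℕ} :
    β ∈ coarsenings (a :: l) ↔
      ∃ γ ∈ coarsenings l, β = a :: γ ∨ ∃ b γ', γ = b :: γ' ∧ β = (a + b) :: γ' := by
  simp only [coarsenings, List.mem_append, List.mem_map, List.mem_filterMap]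
  constructor
  · rintro (⟨γ, hγ, rfl⟩ | ⟨γ, hγ, h⟩)
    · exact ⟨γ, hγ, .inl rfl⟩
    · rcases γ with _ | ⟨b, γ'⟩
      · cases h
      · exact ⟨_, hγ, .inr ⟨b, γ', rfl, (Option.some.inj h).symm⟩⟩
  · rintro ⟨γ, hγ, rfl | ⟨b, γ', rfl, rfl⟩⟩
    exacts [.inl ⟨γ, hγ, rfl⟩, .inr ⟨_, hγ, rfl⟩]

lemma length_le_of_mem_coarsenings {l β : List ℕ} (h : β ∈ coarsenings l) :
    β.length ≤ l.length := by
  induction l generalizing β with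
  | nil => simp_all [coarsenings]
  | cons a l ih =>
    obtain ⟨γ, hγ, rfl | ⟨b, γ', rfl, rfl⟩⟩ := mem_coarsenings_cons.1 h
    · simpa using ih hγ
    · simpa using (ih hγ).trans' (by simp)

lemma pos_of_mem_coarsenings {l β : List ℕ} (hl : ∀ x ∈ l, 0 < x) (h : β ∈ coarsenings l) :
    ∀ x ∈ β, 0 < x := by
  induction l generalizing β with
  | nil => simp_all [coarsenings]
  | cons a l ih =>
    obtain ⟨γ, hγ, rfl | ⟨b, γ', rfl, rfl⟩⟩ := mem_coarsenings_cons.1 h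
    · simpa [hl a (by simp)] using ih (fun x hx => hl x (by simp [hx])) hγ
    · have := ih (fun x hx => hl x (by simp [hx])) hγ
      simp only [List.mem_cons, forall_eq_or_imp] at this ⊢
      exact ⟨by omega, this.2⟩

end coarsenings

lemma X_pathE_succ_eq_sum_coarsenings {n : ℕ} {w : Fin (n + 1) → ℕ} (hw : ∀ i, 0 < w i) :
    X (pathE (n + 1)) w =
      ((coarsenings (List.ofFn w)).map fun β => (-1) ^ (n + 1 - β.length) * pProd β).sum := by
  induction n with
  | zero => simp [X_pathE_one (hw 0), pProd, coarsenings]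
  | succ n ih =>
    have hsplit : List.ofFn w = w 0 :: List.ofFn (Fin.tail w) := List.ofFn_succ
    have htail : List.ofFn (Fin.tail w) = w 1 :: List.ofFn (Fin.tail (Fin.tail w)) :=
      List.ofFn_succ
    have hcontr : List.ofFn (Fin.cons (w 0 + w 1) (Fin.tail (Fin.tail w))) =
        (w 0 + w 1) :: List.ofFn (Fin.tail (Fin.tail w)) := List.ofFn_cons ..
    change X (pathE (n + 2)) w =
      ((coarsenings (List.ofFn w)).map fun β => (-1) ^ (n + 2 - β.length) * pProd β).sum
    rw [eq_sub_of_add_eq (pS_mul_X_pathE hw).symm, ih (w := Fin.tail w) fun i => hw _,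
      ih (Fin.cases (Nat.add_pos_left (hw 0) _) fun i => hw _), hsplit, hcontr, htail,
      coarsenings_cons_cons, List.map_append, List.sum_append, List.map_map, ← htail,
      sub_eq_add_neg, ← neg_one_mul (List.sum _), ← List.sum_map_mul_left, ← List.sum_map_mul_left]
    congr 2
    · refine List.map_congr_left fun β _ => ?_
      simp [pProd, mul_left_comm]
    · refine List.map_congr_left fun β hβ => ?_
      have := length_le_of_mem_coarsenings hβ
      simp only [List.length_cons, List.length_ofFn] at this
      rw [show n + 2 - β.length = n + 1 - β.length + 1 by omega, pow_succ]
      ring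

lemma X_pathE_eq_sum_coarsenings {n : ℕ} {w : Fin n → ℕ} (hw : ∀ i, 0 < w i) :
    X (pathE n) w =
      ((coarsenings (List.ofFn w)).map fun β => (-1) ^ (n - β.length) * pProd β).sum := by
  cases n with
  | zero => simp [X_of_isEmpty, coarsenings, pProd]
  | succ n => exact X_pathE_succ_eq_sum_coarsenings hw

/-! ### Alternating sums over compositions -/

section compExpand

open Finset.Nat Finset.HasAntidiagonal

variable {R : Type*} [CommRing R]

/-- `compExpand b n = ∑_{γ ⊨ n} (-1)^(n - ℓ(γ)) b_γ`; the compositions `γ` of `n` are listed as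
the coarsenings of `1ⁿ`. -/
def compExpand (b : ℕ → R) (n : ℕ) : R :=
  ((coarsenings (List.replicate n 1)).map fun γ => (-1) ^ (n - γ.length) * (γ.map b).prod).sum

lemma compExpand_zero (b : ℕ → R) : compExpand b 0 = 1 := by
  simp [compExpand, coarsenings]

lemma sum_coarsenings_cons_replicate {M : Type*} [AddCommMonoid M] (F : List ℕ → M) (k r : ℕ) :
    ((coarsenings (k :: List.replicate r 1)).map F).sum =
      ∑ p ∈ antidiagonal r,
        ((coarsenings (List.replicate p.2 1)).map fun β => F ((k + p.1) :: β)).sum := by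
  induction r generalizing k with
  | zero => simp [coarsenings]
  | succ r ih =>
    rw [List.replicate_succ, coarsenings_cons_cons, List.map_append, List.sum_append, ih,
      sum_antidiagonal_succ, List.map_map, ← List.replicate_succ]
    simp only [Function.comp_def, add_zero, add_assoc, add_comm 1]

lemma compExpand_succ (b : ℕ → R) (n : ℕ) :
    compExpand b (n + 1) =
      ∑ p ∈ antidiagonal n, (-1) ^ p.1 * b (p.1 + 1) * compExpand b p.2 := by
  rw [compExpand, List.replicate_succ, sum_coarsenings_cons_replicate]
  refine Finset.sum_congr rfl fun p hp => ?_
  rw [compExpand, ← List.sum_map_mul_left]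
  refine congrArg List.sum (List.map_congr_left fun β hβ => ?_)
  have hlen := length_le_of_mem_coarsenings hβ
  rw [List.length_replicate] at hlen
  rw [mem_antidiagonal] at hp
  rw [List.length_cons, show n + 1 - (β.length + 1) = p.1 + (p.2 - β.length) by omega, pow_add,
    List.map_cons, List.prod_cons, add_comm 1]
  ring

lemma compExpand_convolution {b : ℕ → R} (hb : b 0 = 1) (n : ℕ) :
    ∑ p ∈ antidiagonal (n + 1), (-1) ^ p.1 * b p.1 * compExpand b p.2 = 0 := by
  rw [sum_antidiagonal_succ, compExpand_succ, Finset.mul_sum, ← Finset.sum_add_distrib]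
  refine Finset.sum_eq_zero fun p _ => ?_
  simp only [hb, pow_zero, pow_succ]
  ring

lemma eq_compExpand_of_convolution {a b : ℕ → R} (hb : b 0 = 1) (ha : a 0 = 1)
    (h : ∀ n, ∑ p ∈ antidiagonal (n + 1), (-1) ^ p.1 * b p.1 * a p.2 = 0) :
    a = compExpand b := by
  funext n
  induction n using Nat.strong_induction_on with
  | _ n ih =>
    rcases n with _ | n
    · rw [ha, compExpand_zero]
    · have hn := h n
      rw [sum_antidiagonal_succ, hb, pow_zero, one_mul, one_mul, add_eq_zero_iff_eq_neg,
        ← Finset.sum_neg_distrib] at hn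
      rw [hn, compExpand_succ]
      refine Finset.sum_congr rfl fun p hp => ?_
      rw [ih p.2 (by have := mem_antidiagonal.1 hp; omega), pow_succ]
      ring

lemma neg_one_pow_snd_of_mem_antidiagonal {n : ℕ} {p : ℕ × ℕ} (hp : p ∈ antidiagonal n) :
    (-1 : R) ^ p.2 = (-1) ^ n * (-1) ^ p.1 := by
  have hsq : ((-1 : R) ^ p.1) * (-1) ^ p.1 = 1 := by rw [← mul_pow]; simp
  rw [← mem_antidiagonal.1 hp, pow_add]
  linear_combination (-(-1 : R) ^ p.2) * hsq

lemma compExpand_compExpand {b : ℕ → R} (hb : b 0 = 1) : compExpand (compExpand b) = b := by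
  refine (eq_compExpand_of_convolution (compExpand_zero b) hb fun n => ?_).symm
  rw [← sum_antidiagonal_swap]
  calc ∑ p ∈ antidiagonal (n + 1), (-1) ^ p.2 * compExpand b p.2 * b p.1
      = ∑ p ∈ antidiagonal (n + 1), (-1) ^ (n + 1) * ((-1) ^ p.1 * b p.1 * compExpand b p.2) :=
        Finset.sum_congr rfl fun p hp => by
          rw [neg_one_pow_snd_of_mem_antidiagonal hp]
          ring
    _ = 0 := by rw [← Finset.mul_sum, compExpand_convolution hb, mul_zero]

lemma mul_prod_map_compExpand_cons (c : ℕ → R) (μ : List ℕ) (n : ℕ) (l : List ℕ) :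
    (μ.map c).prod * ((n :: l).map (compExpand c)).prod =
      ((coarsenings (List.replicate n 1)).map fun γ => (-1) ^ (n - γ.length) *
        (((μ ++ γ).map c).prod * (l.map (compExpand c)).prod)).sum := by
  rw [List.map_cons, List.prod_cons, compExpand, ← List.sum_map_mul_right,
    ← List.sum_map_mul_left]
  refine congrArg List.sum (List.map_congr_left fun γ _ => ?_)
  rw [List.map_append, List.prod_append]
  ring

lemma map_neg_one_pow_mul {A B : Type*} [Ring A] [Ring B] (U : A →+ B) (k : ℕ) (x : A) :
    U ((-1) ^ k * x) = (-1) ^ k * U x := by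
  rcases k.even_or_odd with hk | hk <;> simp [hk.neg_one_pow]

lemma map_prod_map_compExpand {A B : Type*} [CommRing A] [CommRing B] (U : A →+ B)
    {a : ℕ → A} {b : ℕ → B}
    (h : ∀ μ : List ℕ, (∀ x ∈ μ, 0 < x) → U (μ.map a).prod = (μ.map b).prod) (l : List ℕ) :
    U (l.map (compExpand a)).prod = (l.map (compExpand b)).prod := by
  -- `U` is only additive: the factors `a_i` split off so far are carried along as the prefix `μ`.
  suffices ∀ μ : List ℕ, (∀ x ∈ μ, 0 < x) →
      U ((μ.map a).prod * (l.map (compExpand a)).prod) =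
        (μ.map b).prod * (l.map (compExpand b)).prod by
    simpa using this [] (by simp)
  induction l with
  | nil => simpa using h
  | cons n l ih =>
    intro μ hμ
    rw [mul_prod_map_compExpand_cons, mul_prod_map_compExpand_cons, map_list_sum, List.map_map]
    refine congrArg List.sum (List.map_congr_left fun γ hγ => ?_)
    rw [Function.comp_apply, map_neg_one_pow_mul, ih]
    intro x hx
    rcases List.mem_append.1 hx with hx | hx
    · exact hμ x hx
    · exact pos_of_mem_coarsenings (by simp) hγ x hx

end compExpand

/-! ### Symmetric functions and the map `U` -/

section antidiagonal

open Finset.HasAntidiagonal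

lemma sum_antidiagonal_squarefree_neg_one_pow {σ : Type*} [DecidableEq σ] (m : σ →₀ ℕ) :
    ∑ q ∈ antidiagonal m, (if ∀ j, q.1 j ≤ 1 then (-1 : ℤ) ^ q.1.degree else 0) =
      if m = 0 then 1 else 0 := by
  have hind (S : Finset σ) (j : σ) : S.val.toFinsupp j = if j ∈ S then 1 else 0 := by
    simp [Multiset.toFinsupp_apply, Multiset.count_eq_of_nodup S.nodup]
  have hsqfree {p : σ →₀ ℕ} (hp : ∀ j, p j ≤ 1) : p.support.val.toFinsupp = p := by
    ext j
    have := hp j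
    rw [hind]
    split_ifs with hj <;> simp only [Finsupp.mem_support_iff] at hj <;> omega
  rw [← Finset.sum_filter]
  trans ∑ S ∈ m.support.powerset, (-1 : ℤ) ^ S.card
  swap
  · simp [Finset.sum_powerset_neg_one_pow_card]
  refine Finset.sum_nbij' (fun q => q.1.support) (fun S => (S.val.toFinsupp, m - S.val.toFinsupp))
    ?_ ?_ ?_ ?_ ?_
  all_goals simp only [Finset.mem_filter, mem_antidiagonal, Finset.mem_powerset, Prod.forall]
  · rintro p q ⟨rfl, -⟩
    exact Finsupp.support_mono le_self_add
  · intro S hS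
    have hle : S.val.toFinsupp ≤ m := fun j => by
      rw [hind]
      split_ifs with hj
      · exact Nat.one_le_iff_ne_zero.2 (Finsupp.mem_support_iff.1 (hS hj))
      · exact Nat.zero_le _
    exact ⟨add_tsub_cancel_of_le hle, fun j => by rw [hind]; split_ifs <;> simp⟩
  · rintro p q ⟨rfl, hp⟩
    rw [hsqfree hp, add_tsub_cancel_left]
  · intro S _
    simp [Multiset.toFinsupp_support]
  · rintro p q ⟨-, hp⟩
    rw [Finsupp.degree_apply, Finset.card_eq_sum_ones]
    congr 1
    refine Finset.sum_congr rfl fun j hj => ?_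
    have := hp j
    have := Finsupp.mem_support_iff.1 hj
    omega

lemma sum_antidiagonal_neg_one_pow_mul_coeff_eS_mul_coeff_hS (n : ℕ) {m : ℕ+ →₀ ℕ}
    {q : (ℕ+ →₀ ℕ) × (ℕ+ →₀ ℕ)} (hq : q ∈ antidiagonal m) :
    ∑ p ∈ antidiagonal n, (-1) ^ p.1 *
        (MvPowerSeries.coeff q.1 (eS p.1) * MvPowerSeries.coeff q.2 (hS p.2)) =
      if m.degree = n then
        (if ∀ j, q.1 j ≤ 1 then (((-1 : ℤ) ^ q.1.degree : ℤ) : ℚ) else 0) else 0 := by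
  have hdeg : q.1.degree + q.2.degree = m.degree := by
    rw [← map_add, mem_antidiagonal.1 hq]
  change ∑ p ∈ antidiagonal n, (-1) ^ p.1 *
    ((if q.1.degree = p.1 ∧ ∀ j, q.1 j ≤ 1 then 1 else 0) *
      (if q.2.degree = p.2 then 1 else 0)) = _
  split_ifs with hm hsq
  · rw [Finset.sum_eq_single_of_mem (q.1.degree, q.2.degree)
      (mem_antidiagonal.2 (hdeg.trans hm))]
    · simp [hsq]
    · rintro ⟨i, j⟩ _ hij
      have : ¬(q.1.degree = i ∧ q.2.degree = j) := fun h => hij (by rw [h.1, h.2])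
      split_ifs <;> simp_all
  · exact Finset.sum_eq_zero fun p _ => by simp [hsq]
  · refine Finset.sum_eq_zero fun p hp => ?_
    have := mem_antidiagonal.1 hp
    split_ifs <;> simp_all

lemma sum_antidiagonal_neg_one_pow_mul_eS_mul_hS (n : ℕ) :
    ∑ p ∈ antidiagonal (n + 1), (-1) ^ p.1 * eS p.1 * hS p.2 = 0 := by
  ext m
  have hsign (k : ℕ) (f : MvPowerSeries ℕ+ ℚ) :
      MvPowerSeries.coeff m ((-1) ^ k * f) = (-1) ^ k * MvPowerSeries.coeff m f :=
    map_neg_one_pow_mul (MvPowerSeries.coeff m).toAddMonoidHom k f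
  simp only [map_sum, mul_assoc, hsign, MvPowerSeries.coeff_mul, Finset.mul_sum, map_zero]
  rw [Finset.sum_comm, Finset.sum_congr rfl fun q hq =>
    sum_antidiagonal_neg_one_pow_mul_coeff_eS_mul_coeff_hS (n + 1) hq]
  split_ifs with hm
  · have hm0 : m ≠ 0 := fun h => by simp [h] at hm
    exact_mod_cast (sum_antidiagonal_squarefree_neg_one_pow m).trans (if_neg hm0)
  · simp

end antidiagonal

def sigmaFinSuccEquiv {k : ℕ} (β : Fin (k + 1) → Type*) :
    (Σ i, β i) ≃ β 0 ⊕ Σ i : Fin k, β i.succ where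
  toFun x := Fin.cases (motive := fun i => β i → β 0 ⊕ Σ i : Fin k, β i.succ) Sum.inl
    (fun i v => Sum.inr ⟨i, v⟩) x.1 x.2
  invFun := Sum.elim (Sigma.mk 0) fun x => ⟨x.1.succ, x.2⟩
  left_inv := by rintro ⟨i, v⟩; cases i using Fin.cases <;> rfl
  right_inv := by rintro (v | ⟨i, v⟩) <;> rfl

noncomputable def XPath (n : ℕ) : MvPowerSeries ℕ+ ℚ := X (pathE n) fun _ => 1

lemma XPaths_cons (a : ℕ) (l : List ℕ) : XPaths (a :: l) = XPath a * XPaths l := by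
  let φ : (Σ i : Fin (l.length + 1), Fin ((a :: l).get i)) ≃
      Fin a ⊕ Σ i : Fin l.length, Fin (l.get i) := sigmaFinSuccEquiv _
  have hmap {ι V W : Type} (s : Finset ι) (E : ι → Multiset (Sym2 V)) (f : V → W) :
      (∑ i ∈ s, E i).map (Sym2.map f) = ∑ i ∈ s, (E i).map (Sym2.map f) :=
    map_sum (Multiset.mapAddMonoidHom _) E s
  have hedges : (unionE fun i : Fin (l.length + 1) => pathE ((a :: l).get i)).map (Sym2.map φ) =
      (pathE a).map (Sym2.map Sum.inl) +
        (unionE fun i : Fin l.length => pathE (l.get i)).map (Sym2.map Sum.inr) := by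
    rw [unionE, Fin.sum_univ_succ, Multiset.map_add]
    congr 1
    · rw [Multiset.map_map]
      refine Multiset.map_congr rfl fun e _ => ?_
      rw [Function.comp_apply, Sym2.map_map]
      congr 1
    · rw [hmap, unionE, hmap]
      refine Finset.sum_congr rfl fun i _ => ?_
      rw [Multiset.map_map, Multiset.map_map]
      refine Multiset.map_congr rfl fun e _ => ?_
      rw [Function.comp_apply, Function.comp_apply, Sym2.map_map, Sym2.map_map]
      congr 1
  have hX : XPaths (a :: l) =
      X (unionE fun i : Fin (l.length + 1) => pathE ((a :: l).get i)) fun _ => 1 := rfl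
  have hw : (fun _ => (1 : ℕ)) ∘ φ.symm = Sum.elim (fun _ => 1) fun _ => 1 := by
    funext v
    cases v <;> rfl
  rw [hX, ← X_map_equiv φ, hedges, hw,
    X_add_map_inl_inr _ _ (fun _ => Nat.one_pos) fun _ => Nat.one_pos]
  rfl

lemma XPaths_eq_prod (l : List ℕ) : XPaths l = (l.map XPath).prod := by
  induction l with
  | nil =>
    have : IsEmpty (Σ i : Fin 0, Fin (([] : List ℕ).get i)) := ⟨fun x => x.1.elim0⟩
    exact X_of_isEmpty _ _
  | cons a l ih => rw [XPaths_cons, ih, List.map_cons, List.prod_cons]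

lemma eS_zero : eS 0 = 1 := by
  ext m
  rw [MvPowerSeries.coeff_one]
  change (if m.degree = 0 ∧ _ then _ else _) = _
  by_cases h : m = 0 <;> simp [h, Finsupp.degree_eq_zero_iff]

lemma hS_zero : hS 0 = 1 := by
  ext m
  rw [MvPowerSeries.coeff_one]
  change (if m.degree = 0 then _ else _) = _
  simp only [Finsupp.degree_eq_zero_iff]

lemma pS_zero : pS 0 = 1 := by
  ext m
  rw [MvPowerSeries.coeff_one]
  change (if ∃ j : ℕ+, m = Finsupp.single j 0 then _ else _) = _
  simp

lemma hS_eq_compExpand : hS = compExpand eS :=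
  eq_compExpand_of_convolution eS_zero hS_zero sum_antidiagonal_neg_one_pow_mul_eS_mul_hS

lemma XPath_eq_compExpand : XPath = compExpand pS := by
  funext n
  rw [XPath, X_pathE_eq_sum_coarsenings fun _ => Nat.one_pos, List.ofFn_const]
  rfl

lemma pS_eq_compExpand : pS = compExpand XPath := by
  rw [XPath_eq_compExpand, compExpand_compExpand pS_zero]

section transfer

variable (U : MvPowerSeries ℕ+ ℚ →ₗ[ℚ] MvPowerSeries ℕ+ ℚ)

lemma map_prod_map_eS
    (hU : ∀ l : List ℕ, l.Pairwise (· ≥ ·) → (∀ x ∈ l, 0 < x) → U (eProd l) = XPaths l)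
    {μ : List ℕ} (hμ : ∀ x ∈ μ, 0 < x) :
    U (μ.map eS).prod = (μ.map XPath).prod := by
  have hperm := List.perm_insertionSort (· ≥ ·) μ
  rw [← (hperm.map eS).prod_eq, ← eProd, hU _ (List.pairwise_insertionSort _ _)
    fun x hx => hμ x (hperm.mem_iff.1 hx), XPaths_eq_prod, (hperm.map XPath).prod_eq]

lemma map_hProd
    (hU : ∀ l : List ℕ, l.Pairwise (· ≥ ·) → (∀ x ∈ l, 0 < x) → U (eProd l) = XPaths l)
    (l : List ℕ) : U (hProd l) = pProd l := by
  rw [hProd, pProd, hS_eq_compExpand, pS_eq_compExpand]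
  exact map_prod_map_compExpand U.toAddMonoidHom (fun μ hμ => map_prod_map_eS U hU hμ) l

end transfer

theorem U_ribbon_eq_weighted_path_general
    (U : MvPowerSeries ℕ+ ℚ →ₗ[ℚ] MvPowerSeries ℕ+ ℚ)
    (hU : ∀ l : List ℕ, l.Pairwise (· ≥ ·) → (∀ x ∈ l, 0 < x) → U (eProd l) = XPaths l)
    (α : List ℕ) (hαpos : ∀ x ∈ α, 0 < x) :
    U (ribbon α) = Xwpath α := by
  have hX := X_pathE_eq_sum_coarsenings (w := α.get) fun i => hαpos _ (List.get_mem α i)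
  rw [List.ofFn_get] at hX
  rw [ribbon, map_list_sum, List.map_map, Xwpath, hX]
  refine congrArg List.sum (List.map_congr_left fun β _ => ?_)
  rw [Function.comp_apply, map_smul, map_hProd U hU, pProd, sortDesc,
    ((List.perm_insertionSort _ β).map pS).prod_eq, Algebra.smul_def, map_pow, map_neg, map_one]
  rfl

/-- **Theorem.** Let `U : Sym → Sym` be the (unique) linear map with `U(e_λ) = X_{P_λ}`
for every partition `λ`.  Then `U(r_α) = X_{(P_{ℓ(α)}, α)}` for every nonempty
composition `α`.  (Stated for an arbitrary linear map satisfying the defining property.) -/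
theorem U_ribbon_eq_weighted_path
    (U : MvPowerSeries ℕ+ ℚ →ₗ[ℚ] MvPowerSeries ℕ+ ℚ)
    (hU : ∀ l : List ℕ, l.Pairwise (· ≥ ·) → (∀ x ∈ l, 0 < x) → U (eProd l) = XPaths l)
    (α : List ℕ) (hα : α ≠ []) (hαpos : ∀ x ∈ α, 0 < x) :
    U (ribbon α) = Xwpath α :=
  U_ribbon_eq_weighted_path_general U hU α hαpos

end CSF
end
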